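/- For every strategy profile s of the 0,1-game (i.e., with S0(s) or S1(s)), SAcBes(s) implies that s is a subgame perfect equilibrium, SPE(s). -/

import Mathlib

/-- The two agents of the game. -/
inductive Agent : Type
  | A
  | B

/-- The two choices: down and right. -/
inductive Choice : Type
  | d
  | r

/-- Payoff assignments for the agents. -/
abbrev Payoffs : Type := Agent → ℝ

/-! ### Strategy profiles: final coalgebra of `X ↦ ℝ^P + P × Choice × X × X` -/

def StratProfF : PFunctor.{0} :=
  ⟨Payoffs ⊕ (Agent × Choice), fun x =>
    match x with
    | Sum.inl _ => Empty
    | Sum.inr _ => Bool⟩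

/-- Strategy profiles: the final coalgebra (M-type) of `StratProfF`. -/
abbrev StratProf : Type := StratProfF.M

/-- Leaf strategy profile `⟨⟨f⟩⟩`. -/
def sleaf (f : Payoffs) : StratProf :=
  PFunctor.M.mk ⟨Sum.inl f, fun (e : Empty) => e.elim⟩

/-- Node strategy profile `⟨⟨p, c, s_d, s_r⟩⟩` (`true` child = down, `false` child = right). -/
def snode (p : Agent) (c : Choice) (sd sr : StratProf) : StratProf :=
  PFunctor.M.mk ⟨Sum.inr (p, c), fun (b : Bool) => if b then sd else sr⟩

/-- Convergence `↓s`: the least predicate closed under the given rules. -/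
inductive Conv : StratProf → Prop
  | leaf (f : Payoffs) : Conv (sleaf f)
  | down (p : Agent) (sd sr : StratProf) : Conv sd → Conv (snode p Choice.d sd sr)
  | right (p : Agent) (sd sr : StratProf) : Conv sr → Conv (snode p Choice.r sd sr)

/-- One step of the strong-convergence condition. -/
def SConvStep (R : StratProf → Prop) (s : StratProf) : Prop :=
  (∃ f, s = sleaf f) ∨
    ∃ p c sd sr, s = snode p c sd sr ∧ Conv s ∧ R sd ∧ R sr

/-- Strong convergence `⇓s`: the largest predicate `R` with `R ≤ SConvStep R`. -/
def SConv (s : StratProf) : Prop :=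
  ∃ R : StratProf → Prop, R s ∧ ∀ t, R t → SConvStep R t

/-- One step of the `□Φ` condition. -/
def BoxStep (Φ : StratProf → Prop) (R : StratProf → Prop) (t : StratProf) : Prop :=
  Φ t ∧ ∀ p c sd sr, t = snode p c sd sr → R sd ∧ R sr

/-- The modality `□Φ`: the largest predicate `R` with `R ≤ BoxStep Φ R`. -/
def Box (Φ : StratProf → Prop) (s : StratProf) : Prop :=
  ∃ R : StratProf → Prop, R s ∧ ∀ t, R t → BoxStep Φ R t

/-- The partial payoff function `ŝ`, as an inductively defined graph relation:
`PayoffRel s f` means "`ŝ` is defined and equals `f`". -/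
inductive PayoffRel : StratProf → Payoffs → Prop
  | leaf (f : Payoffs) : PayoffRel (sleaf f) f
  | down (p : Agent) (sd sr : StratProf) (f : Payoffs) :
      PayoffRel sd f → PayoffRel (snode p Choice.d sd sr) f
  | right (p : Agent) (sd sr : StratProf) (f : Payoffs) :
      PayoffRel sr f → PayoffRel (snode p Choice.r sd sr) f

/-- Bisimilarity `s' ~ s`: the largest relation satisfying the coinductive clauses. -/
def Bisim (s' s : StratProf) : Prop :=
  ∃ R : StratProf → StratProf → Prop, R s' s ∧
    ∀ t' t, R t' t →
      ((∃ f, t' = sleaf f ∧ t = sleaf f) ∨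
        ∃ p c td' tr' td tr,
          t' = snode p c td' tr' ∧ t = snode p c td tr ∧ R td' td ∧ R tr' tr)

/-- The subprofile relation `s' ≼ s`: the least relation closed under the given rules. -/
inductive Subprof : StratProf → StratProf → Prop
  | bisim {s' s : StratProf} : Bisim s' s → Subprof s' s
  | down {s' : StratProf} {p : Agent} {c : Choice} {sd sr : StratProf} :
      Subprof s' sd → Subprof s' (snode p c sd sr)
  | right {s' : StratProf} {p : Agent} {c : Choice} {sd sr : StratProf} :
      Subprof s' sr → Subprof s' (snode p c sd sr)

/-! ### Games: final coalgebra of `X ↦ ℝ^P + P × X × X` -/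

def GameF : PFunctor.{0} :=
  ⟨Payoffs ⊕ Agent, fun x =>
    match x with
    | Sum.inl _ => Empty
    | Sum.inr _ => Bool⟩

/-- Games: the final coalgebra (M-type) of `GameF`. -/
abbrev Game : Type := GameF.M

/-- Leaf game `⟨f⟩`. -/
def gleaf (f : Payoffs) : Game :=
  PFunctor.M.mk ⟨Sum.inl f, fun (e : Empty) => e.elim⟩

/-- Node game `⟨p, g_d, g_r⟩`. -/
def gnode (p : Agent) (gd gr : Game) : Game :=
  PFunctor.M.mk ⟨Sum.inr p, fun (b : Bool) => if b then gd else gr⟩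

/-- The corecursive function `game : StratProf → Game` erasing the choices. -/
def gameOf : StratProf → Game :=
  PFunctor.M.corec (fun s =>
    match PFunctor.M.dest s with
    | ⟨Sum.inl f, _⟩ => ⟨Sum.inl f, fun (e : Empty) => e.elim⟩
    | ⟨Sum.inr pc, k⟩ => ⟨Sum.inr pc.1, k⟩)

/-! ### Strategies: final coalgebra of `X ↦ ℝ^P + (P + Choice) × X × X` -/

def StratF : PFunctor.{0} :=
  ⟨Payoffs ⊕ (Agent ⊕ Choice), fun x =>
    match x with
    | Sum.inl _ => Empty
    | Sum.inr _ => Bool⟩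

/-- Strategies: the final coalgebra (M-type) of `StratF`. -/
abbrev Strat : Type := StratF.M

/-- Leaf strategy `⟨f⟩`. -/
def stleaf (f : Payoffs) : Strat :=
  PFunctor.M.mk ⟨Sum.inl f, fun (e : Empty) => e.elim⟩

/-- Node strategy `⟨x, st₁, st₂⟩` with `x` an agent or a choice. -/
def stnode (x : Agent ⊕ Choice) (s1 s2 : Strat) : Strat :=
  PFunctor.M.mk ⟨Sum.inr x, fun (b : Bool) => if b then s1 else s2⟩

/-- The corecursive function `st2g` replacing choice labels by the given agent. -/
def st2gStep (p : Agent) (t : Strat) : GameF.Obj Strat :=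
  match PFunctor.M.dest t with
  | ⟨Sum.inl f, _⟩ => ⟨Sum.inl f, fun (e : Empty) => e.elim⟩
  | ⟨Sum.inr (Sum.inl q), k⟩ => ⟨Sum.inr q, k⟩
  | ⟨Sum.inr (Sum.inr _), k⟩ => ⟨Sum.inr p, k⟩

/-- The corecursive function `st2g` replacing choice labels by the given agent. -/
def st2g (st : Strat) (p : Agent) : Game :=
  PFunctor.M.corec (st2gStep p) st

/-- `st` is full for `p`: coinductively, the agent `p` occurs nowhere as a label. -/
def Full (p : Agent) (st : Strat) : Prop :=
  ∃ R : Strat → Prop, R st ∧ ∀ t, R t →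
    (∃ f, t = stleaf f) ∨
      ∃ x s1 s2, t = stnode x s1 s2 ∧ x ≠ Sum.inl p ∧ R s1 ∧ R s2

/-- A one-level view of a strategy. -/
inductive StratView : Type
  | leaf (f : Payoffs)
  | node (x : Agent ⊕ Choice) (k : Bool → Strat)

/-- Destruct a strategy into its one-level view. -/
def stratView (t : Strat) : StratView :=
  match PFunctor.M.dest t with
  | ⟨Sum.inl f, _⟩ => StratView.leaf f
  | ⟨Sum.inr x, k⟩ => StratView.node x k

/-- One corecursion step for the sum of the strategy of `A` (first component)
and the strategy of `B` (second component). -/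
def oplusStep : Strat × Strat → StratProfF.Obj (Strat × Strat) := fun q =>
  match stratView q.1, stratView q.2 with
  | StratView.leaf f, _ => ⟨Sum.inl f, fun (e : Empty) => e.elim⟩
  | StratView.node _ _, StratView.leaf f => ⟨Sum.inl f, fun (e : Empty) => e.elim⟩
  | StratView.node (Sum.inr c) k1, StratView.node (Sum.inl p') k2 =>
      ⟨Sum.inr (p', c), fun (b : Bool) => (k1 b, k2 b)⟩
  | StratView.node (Sum.inr c) k1, StratView.node (Sum.inr _) k2 =>
      ⟨Sum.inr (Agent.A, c), fun (b : Bool) => (k1 b, k2 b)⟩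
  | StratView.node (Sum.inl p') k1, StratView.node (Sum.inr c) k2 =>
      ⟨Sum.inr (p', c), fun (b : Bool) => (k1 b, k2 b)⟩
  | StratView.node (Sum.inl p') k1, StratView.node (Sum.inl _) k2 =>
      ⟨Sum.inr (p', Choice.d), fun (b : Bool) => (k1 b, k2 b)⟩

/-- The sum `st_A ⊕ st_B` of the strategies of the two agents. -/
def oplus (stA stB : Strat) : StratProf :=
  PFunctor.M.corec oplusStep (stA, stB)

/-! ### Equilibria -/

/-- The local equilibrium condition `PE`. -/
def PE (s : StratProf) : Prop :=
  SConv s ∧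
    (∀ p sd sr fd fr, s = snode p Choice.d sd sr →
        PayoffRel sd fd → PayoffRel sr fr → fd p ≥ fr p) ∧
    (∀ p sd sr fd fr, s = snode p Choice.r sd sr →
        PayoffRel sd fd → PayoffRel sr fr → fr p ≥ fd p)

/-- Subgame perfect equilibrium: `SPE = □PE`. -/
def SPE : StratProf → Prop := Box PE

/-- Convertibility `s ⊢p⊣ s'`: the inductively defined deviation relation of agent `p`. -/
inductive Convert (p : Agent) : StratProf → StratProf → Prop
  | bisim {s s' : StratProf} : Bisim s s' → Convert p s s'
  | own {c c' : Choice} {s1 s2 s1' s2' : StratProf} :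
      Convert p s1 s1' → Convert p s2 s2' →
      Convert p (snode p c s1 s2) (snode p c' s1' s2')
  | other {p' : Agent} {c : Choice} {s1 s2 s1' s2' : StratProf} :
      Convert p s1 s1' → Convert p s2 s2' →
      Convert p (snode p' c s1 s2) (snode p' c s1' s2')

/-- Nash equilibrium: no agent can improve her payoff by converting
(the inequality being required whenever both payoffs are defined). -/
def Nash (s : StratProf) : Prop :=
  ∀ p s' f f', Convert p s s' → PayoffRel s f → PayoffRel s' f' → f p ≥ f' p

/-! ### The 0,1-game -/

/-- The payoff function `A ↦ 0, B ↦ 1`. -/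
def f01 : Payoffs := fun p => match p with | Agent.A => 0 | Agent.B => 1

/-- The payoff function `A ↦ 1, B ↦ 0`. -/
def f10 : Payoffs := fun p => match p with | Agent.A => 1 | Agent.B => 0

/-- `S01 true = S0` and `S01 false = S1`: the largest pair of predicates
characterizing the strategy profiles of the 0,1-game. -/
def S01 (i : Bool) (s : StratProf) : Prop :=
  ∃ R : Bool → StratProf → Prop, R i s ∧
    (∀ t, R true t → ∃ c s', t = snode Agent.A c (sleaf f01) s' ∧ R false s') ∧
    (∀ t, R false t → ∃ c s', t = snode Agent.B c (sleaf f10) s' ∧ R true s')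

def S0 : StratProf → Prop := S01 true
def S1 : StratProf → Prop := S01 false

/-- One step of the `AcBes` condition. -/
def AcBesStep (R : StratProf → Prop) (s : StratProf) : Prop :=
  ∀ p c f s', s = snode p c (sleaf f) s' →
    (p = Agent.A ∧ f = f01 ∧ c = Choice.r ∧ R s') ∨
    (p = Agent.B ∧ f = f10 ∧ (c = Choice.d ∨ R s'))

/-- `AcBes`: "A continues and B eventually stops", the least predicate `R`
such that `AcBesStep R ≤ R` (impredicative encoding of the least fixed point). -/
def AcBes (s : StratProf) : Prop :=
  ∀ R : StratProf → Prop, (∀ t, AcBesStep R t → R t) → R s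

/-- One step of the `BcAes` condition. -/
def BcAesStep (R : StratProf → Prop) (s : StratProf) : Prop :=
  ∀ p c f s', s = snode p c (sleaf f) s' →
    (p = Agent.B ∧ f = f10 ∧ c = Choice.r ∧ R s') ∨
    (p = Agent.A ∧ f = f01 ∧ (c = Choice.d ∨ R s'))

/-- `BcAes`: "B continues and A eventually stops", symmetric to `AcBes`. -/
def BcAes (s : StratProf) : Prop :=
  ∀ R : StratProf → Prop, (∀ t, BcAesStep R t → R t) → R s

def SAcBes : StratProf → Prop := Box AcBes
def SBcAes : StratProf → Prop := Box BcAes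

/-! ### The 0,1-game `g01`, the escalation strategies and the all-continue profile -/

/-- Corecursion step for `g01` and `g10`:
`inl true ↦ g01`, `inl false ↦ g10`, `inr true ↦ ⟨f01⟩`, `inr false ↦ ⟨f10⟩`. -/
def g01Step : Bool ⊕ Bool → GameF.Obj (Bool ⊕ Bool)
  | Sum.inl true => ⟨Sum.inr Agent.A, fun (b : Bool) => if b then Sum.inr true else Sum.inl false⟩
  | Sum.inl false => ⟨Sum.inr Agent.B, fun (b : Bool) => if b then Sum.inr false else Sum.inl true⟩
  | Sum.inr true => ⟨Sum.inl f01, fun (e : Empty) => e.elim⟩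
  | Sum.inr false => ⟨Sum.inl f10, fun (e : Empty) => e.elim⟩

/-- The 0,1-game: `g01 = ⟨A, ⟨f01⟩, g10⟩` where `g10 = ⟨B, ⟨f10⟩, g01⟩`. -/
def g01 : Game := PFunctor.M.corec g01Step (Sum.inl true)

/-- `g10 = ⟨B, ⟨f10⟩, g01⟩`. -/
def g10 : Game := PFunctor.M.corec g01Step (Sum.inl false)

/-- Corecursion step for `st_{A,∞} = ⟨r, ⟨f01⟩, ⟨B, ⟨f10⟩, st_{A,∞}⟩⟩`. -/
def stAinfStep : ℕ → StratF.Obj ℕ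
  | 0 => ⟨Sum.inr (Sum.inr Choice.r), fun (b : Bool) => if b then 2 else 1⟩
  | 1 => ⟨Sum.inr (Sum.inl Agent.B), fun (b : Bool) => if b then 3 else 0⟩
  | 2 => ⟨Sum.inl f01, fun (e : Empty) => e.elim⟩
  | _ => ⟨Sum.inl f10, fun (e : Empty) => e.elim⟩

/-- The escalation strategy of `A`: `st_{A,∞} = ⟨r, ⟨f01⟩, ⟨B, ⟨f10⟩, st_{A,∞}⟩⟩`. -/
def stAinf : Strat := PFunctor.M.corec stAinfStep 0

/-- Corecursion step for `st_{B,∞} = ⟨A, ⟨f01⟩, ⟨r, ⟨f10⟩, st_{B,∞}⟩⟩`. -/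
def stBinfStep : ℕ → StratF.Obj ℕ
  | 0 => ⟨Sum.inr (Sum.inl Agent.A), fun (b : Bool) => if b then 2 else 1⟩
  | 1 => ⟨Sum.inr (Sum.inr Choice.r), fun (b : Bool) => if b then 3 else 0⟩
  | 2 => ⟨Sum.inl f01, fun (e : Empty) => e.elim⟩
  | _ => ⟨Sum.inl f10, fun (e : Empty) => e.elim⟩

/-- The escalation strategy of `B`: `st_{B,∞} = ⟨A, ⟨f01⟩, ⟨r, ⟨f10⟩, st_{B,∞}⟩⟩`. -/
def stBinf : Strat := PFunctor.M.corec stBinfStep 0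

/-- Corecursion step for the all-continue profile
`s_{A,∞} = ⟨⟨A, r, ⟨⟨f01⟩⟩, s_{B,∞}⟩⟩`, `s_{B,∞} = ⟨⟨B, r, ⟨⟨f10⟩⟩, s_{A,∞}⟩⟩`. -/
def sAinfStep : ℕ → StratProfF.Obj ℕ
  | 0 => ⟨Sum.inr (Agent.A, Choice.r), fun (b : Bool) => if b then 2 else 1⟩
  | 1 => ⟨Sum.inr (Agent.B, Choice.r), fun (b : Bool) => if b then 3 else 0⟩
  | 2 => ⟨Sum.inl f01, fun (e : Empty) => e.elim⟩
  | _ => ⟨Sum.inl f10, fun (e : Empty) => e.elim⟩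

/-- The all-continue profile `s_{A,∞}` of the 0,1-game. -/
def sAinf : StratProf := PFunctor.M.corec sAinfStep 0

/-- The profile `s_{B,∞}`. -/
def sBinf : StratProf := PFunctor.M.corec sAinfStep 1

/-- `s_□r`, the profile of the 0,1-game where both agents continue forever
(it satisfies `s_□r = ⟨⟨A, r, ⟨⟨f01⟩⟩, ⟨⟨B, r, ⟨⟨f10⟩⟩, s_□r⟩⟩⟩⟩`). -/
def sBoxr : StratProf := sAinf

/-- `s_{d□r} = ⟨⟨A, d, ⟨⟨f01⟩⟩, ⟨⟨B, r, ⟨⟨f10⟩⟩, s_□r⟩⟩⟩⟩`. -/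
def sdBoxr : StratProf :=
  snode Agent.A Choice.d (sleaf f01) (snode Agent.B Choice.r (sleaf f10) sBoxr)

/-! ### Finite games and profiles -/

/-- Finite strategy profiles. -/
inductive FinStratProf : Type
  | leaf (f : Payoffs)
  | node (p : Agent) (c : Choice) (sd sr : FinStratProf)

/-- Finite games. -/
inductive FinGame : Type
  | leaf (f : Payoffs)
  | node (p : Agent) (gd gr : FinGame)

/-- The (total) payoff function of a finite strategy profile. -/
def fpayoff : FinStratProf → Payoffs
  | FinStratProf.leaf f => f
  | FinStratProf.node _ Choice.d sd _ => fpayoff sd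
  | FinStratProf.node _ Choice.r _ sr => fpayoff sr

/-- The game of a finite strategy profile (erasing the choices). -/
def fgame : FinStratProf → FinGame
  | FinStratProf.leaf f => FinGame.leaf f
  | FinStratProf.node p _ sd sr => FinGame.node p (fgame sd) (fgame sr)

/-- Backward induction for finite strategy profiles. -/
inductive BI : FinStratProf → Prop
  | leaf (f : Payoffs) : BI (FinStratProf.leaf f)
  | node (p : Agent) (c : Choice) (sd sr : FinStratProf) :
      BI sd → BI sr →
      (c = Choice.d → fpayoff sd p ≥ fpayoff sr p) →
      (c = Choice.r → fpayoff sr p ≥ fpayoff sd p) →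
      BI (FinStratProf.node p c sd sr)

/-- The family `F01` of finite truncations of the 0,1-game (cut after `B`). -/
inductive F01 : FinGame → Prop
  | base : F01 (FinGame.leaf f01)
  | step (g : FinGame) : F01 g →
      F01 (FinGame.node Agent.A (FinGame.leaf f01) (FinGame.node Agent.B (FinGame.leaf f10) g))

/-- `SF01`: agent B always continues, agent A does whatever she likes. -/
inductive SF01 : FinStratProf → Prop
  | base : SF01 (FinStratProf.leaf f01)
  | step (c : Choice) (s' : FinStratProf) : SF01 s' →
      SF01 (FinStratProf.node Agent.A c (FinStratProf.leaf f01)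
        (FinStratProf.node Agent.B Choice.r (FinStratProf.leaf f10) s'))

mutual
  /-- The family `K01` of finite truncations of the 0,1-game (cut after `A`). -/
  inductive K01 : FinGame → Prop
    | step (g : FinGame) : K01' g → K01 (FinGame.node Agent.A (FinGame.leaf f01) g)
  /-- The auxiliary family `K01'`. -/
  inductive K01' : FinGame → Prop
    | base : K01' (FinGame.leaf f10)
    | step (g : FinGame) : K01 g → K01' (FinGame.node Agent.B (FinGame.leaf f10) g)
end

mutual
  /-- `SK01`: agent A always continues, agent B does whatever she likes. -/
  inductive SK01 : FinStratProf → Prop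
    | step (s' : FinStratProf) : SK01' s' →
        SK01 (FinStratProf.node Agent.A Choice.r (FinStratProf.leaf f01) s')
  /-- The auxiliary predicate `SK01'`. -/
  inductive SK01' : FinStratProf → Prop
    | base : SK01' (FinStratProf.leaf f10)
    | step (c : Choice) (s' : FinStratProf) : SK01 s' →
        SK01' (FinStratProf.node Agent.B c (FinStratProf.leaf f10) s')
end

/-! Under `AcBes`, a profile of the 0,1-game has `A` continue and `B` eventually stop, so it
converges to the leaf `f10`; under `SAcBes` this holds at every node of the game.  Hence at each
node the right subgame yields `f10`: `A` (who must continue) prefers it to her stopping payoff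
`f01`, and for `B` both moves yield `f10`.  Convergence at every node gives strong convergence. -/

theorem dest_sleaf (f : Payoffs) :
    PFunctor.M.dest (sleaf f) = ⟨Sum.inl f, fun (e : Empty) => e.elim⟩ :=
  PFunctor.M.dest_mk _

theorem dest_snode (p : Agent) (c : Choice) (sd sr : StratProf) :
    PFunctor.M.dest (snode p c sd sr) = ⟨Sum.inr (p, c), fun (b : Bool) => if b then sd else sr⟩ :=
  PFunctor.M.dest_mk _

theorem sleaf_ne_snode (f : Payoffs) (p : Agent) (c : Choice) (sd sr : StratProf) :
    sleaf f ≠ snode p c sd sr := by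
  intro h
  have h' := congrArg (fun t => (PFunctor.M.dest t).1) h
  simp only [dest_sleaf, dest_snode] at h'
  exact Sum.inl_ne_inr h'

theorem sleaf_injective : Function.Injective sleaf := by
  intro f g h
  have h' := congrArg (fun t => (PFunctor.M.dest t).1) h
  simp only [dest_sleaf] at h'
  exact Sum.inl_injective h'

theorem snode_inj {p p' : Agent} {c c' : Choice} {sd sr sd' sr' : StratProf}
    (h : snode p c sd sr = snode p' c' sd' sr') :
    p = p' ∧ c = c' ∧ sd = sd' ∧ sr = sr' := by
  have h' := congrArg PFunctor.M.dest h
  rw [dest_snode, dest_snode] at h'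
  injection h' with hpc hk
  injection hpc with hpc
  injection hpc with hp hc
  subst hp hc
  exact ⟨rfl, rfl, by simpa using congrFun hk true, by simpa using congrFun hk false⟩

theorem PayoffRel.eq_of_sleaf {f g : Payoffs} (h : PayoffRel (sleaf f) g) : g = f := by
  generalize hs : sleaf f = s at h
  cases h with
  | leaf => exact sleaf_injective hs.symm
  | down => exact absurd hs (sleaf_ne_snode _ _ _ _ _)
  | right => exact absurd hs (sleaf_ne_snode _ _ _ _ _)

theorem PayoffRel.of_snode_d {p : Agent} {sd sr : StratProf} {f : Payoffs}
    (h : PayoffRel (snode p Choice.d sd sr) f) : PayoffRel sd f := by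
  generalize hs : snode p Choice.d sd sr = s at h
  cases h with
  | leaf => exact absurd hs.symm (sleaf_ne_snode _ _ _ _ _)
  | down _ _ _ _ h => exact (snode_inj hs).2.2.1 ▸ h
  | right => exact Choice.noConfusion (snode_inj hs).2.1

theorem PayoffRel.of_snode_r {p : Agent} {sd sr : StratProf} {f : Payoffs}
    (h : PayoffRel (snode p Choice.r sd sr) f) : PayoffRel sr f := by
  generalize hs : snode p Choice.r sd sr = s at h
  cases h with
  | leaf => exact absurd hs.symm (sleaf_ne_snode _ _ _ _ _)
  | down => exact Choice.noConfusion (snode_inj hs).2.1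
  | right _ _ _ _ h => exact (snode_inj hs).2.2.2 ▸ h

theorem PayoffRel.unique {s : StratProf} {f g : Payoffs} (hf : PayoffRel s f)
    (hg : PayoffRel s g) : f = g := by
  induction hf with
  | leaf => exact hg.eq_of_sleaf.symm
  | down _ _ _ _ _ ih => exact ih hg.of_snode_d
  | right _ _ _ _ _ ih => exact ih hg.of_snode_r

theorem PayoffRel.conv {s : StratProf} {f : Payoffs} (h : PayoffRel s f) : Conv s := by
  induction h with
  | leaf f => exact Conv.leaf f
  | down p sd sr _ _ ih => exact Conv.down p sd sr ih
  | right p sd sr _ _ ih => exact Conv.right p sd sr ih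

theorem box_dest {Φ : StratProf → Prop} {s : StratProf} (h : Box Φ s) :
    Φ s ∧ ∀ p c sd sr, s = snode p c sd sr → Box Φ sd ∧ Box Φ sr := by
  obtain ⟨R, hs, hR⟩ := h
  refine ⟨(hR s hs).1, fun p c sd sr he => ?_⟩
  obtain ⟨hd, hr⟩ := (hR s hs).2 p c sd sr he
  exact ⟨⟨R, hd, hR⟩, ⟨R, hr, hR⟩⟩

theorem box_of_box {Φ Ψ : StratProf → Prop} {s : StratProf} (h : Box Φ s)
    (hΦΨ : ∀ t, Box Φ t → Ψ t) : Box Ψ s :=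
  ⟨Box Φ, h, fun t ht => ⟨hΦΨ t ht, (box_dest ht).2⟩⟩

theorem sConv_of_box_conv {s : StratProf} (h : Box Conv s) : SConv s := by
  refine ⟨Box Conv, h, fun t ht => ?_⟩
  obtain ⟨hconv, hchildren⟩ := box_dest ht
  cases hconv with
  | leaf f => exact Or.inl ⟨f, rfl⟩
  | down p sd sr hd =>
    exact Or.inr ⟨p, _, sd, sr, rfl, Conv.down p sd sr hd, hchildren p _ sd sr rfl⟩
  | right p sd sr hr =>
    exact Or.inr ⟨p, _, sd, sr, rfl, Conv.right p sd sr hr, hchildren p _ sd sr rfl⟩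

theorem S0.dest {s : StratProf} (h : S0 s) :
    ∃ c s', s = snode Agent.A c (sleaf f01) s' ∧ S1 s' := by
  obtain ⟨R, hs, h0, h1⟩ := h
  obtain ⟨c, s', he, hs'⟩ := h0 s hs
  exact ⟨c, s', he, R, hs', h0, h1⟩

theorem S1.dest {s : StratProf} (h : S1 s) :
    ∃ c s', s = snode Agent.B c (sleaf f10) s' ∧ S0 s' := by
  obtain ⟨R, hs, h0, h1⟩ := h
  obtain ⟨c, s', he, hs'⟩ := h1 s hs
  exact ⟨c, s', he, R, hs', h0, h1⟩

theorem payoffRel_f10_of_acBes {s : StratProf} (hs : S0 s ∨ S1 s) (h : AcBes s) :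
    PayoffRel s f10 := by
  refine h (fun t => (S0 t ∨ S1 t) → PayoffRel t f10) (fun t step ht => ?_) hs
  rcases ht with h0 | h1
  · obtain ⟨c, s', rfl, hs'⟩ := h0.dest
    rcases step _ _ _ _ rfl with ⟨-, -, rfl, ih⟩ | ⟨hAB, -⟩
    · exact PayoffRel.right _ _ _ _ (ih (Or.inr hs'))
    · exact Agent.noConfusion hAB
  · obtain ⟨c, s', rfl, hs'⟩ := h1.dest
    cases c with
    | d => exact PayoffRel.down _ _ _ _ (PayoffRel.leaf f10)
    | r =>
      rcases step _ _ _ _ rfl with ⟨hBA, -⟩ | ⟨-, -, hc | ih⟩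
      · exact Agent.noConfusion hBA
      · exact Choice.noConfusion hc
      · exact PayoffRel.right _ _ _ _ (ih (Or.inl hs'))

theorem AcBes.choice_eq_r_of_snode_A {c : Choice} {f : Payoffs} {s' : StratProf}
    (h : AcBes (snode Agent.A c (sleaf f) s')) : c = Choice.r := by
  refine h (fun t => ∀ c f s', t = snode Agent.A c (sleaf f) s' → c = Choice.r)
    (fun t step c f s' ht => ?_) c f s' rfl
  rcases step Agent.A c f s' ht with ⟨-, -, hc, -⟩ | ⟨hAB, -⟩
  · exact hc
  · exact Agent.noConfusion hAB

theorem sAcBes01_dest {s : StratProf} (hs : S0 s ∨ S1 s) (h : SAcBes s) :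
    (∃ s', s = snode Agent.A Choice.r (sleaf f01) s' ∧ S1 s' ∧ SAcBes s') ∨
      ∃ c s', s = snode Agent.B c (sleaf f10) s' ∧ S0 s' ∧ SAcBes s' := by
  obtain ⟨hAcBes, hchildren⟩ := box_dest h
  rcases hs with h0 | h1
  · obtain ⟨c, s', rfl, hs'⟩ := h0.dest
    obtain rfl := hAcBes.choice_eq_r_of_snode_A
    exact Or.inl ⟨s', rfl, hs', (hchildren _ _ _ _ rfl).2⟩
  · obtain ⟨c, s', rfl, hs'⟩ := h1.dest
    exact Or.inr ⟨c, s', rfl, hs', (hchildren _ _ _ _ rfl).2⟩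

theorem sAcBes01_payoffs {p : Agent} {c : Choice} {sd sr : StratProf} {fd fr : Payoffs}
    (hs : S0 (snode p c sd sr) ∨ S1 (snode p c sd sr)) (h : SAcBes (snode p c sd sr))
    (hd : PayoffRel sd fd) (hr : PayoffRel sr fr) :
    (p = Agent.A ∧ c = Choice.r ∧ fd = f01 ∧ fr = f10) ∨ (p = Agent.B ∧ fd = f10 ∧ fr = f10) := by
  rcases sAcBes01_dest hs h with ⟨s', he, hs', h'⟩ | ⟨c', s', he, hs', h'⟩
  · obtain ⟨rfl, rfl, rfl, rfl⟩ := snode_inj he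
    exact Or.inl ⟨rfl, rfl, hd.eq_of_sleaf,
      hr.unique (payoffRel_f10_of_acBes (Or.inr hs') (box_dest h').1)⟩
  · obtain ⟨rfl, -, rfl, rfl⟩ := snode_inj he
    exact Or.inr ⟨rfl, hd.eq_of_sleaf,
      hr.unique (payoffRel_f10_of_acBes (Or.inl hs') (box_dest h').1)⟩

def SAcBes01OrLeaf (t : StratProf) : Prop :=
  ((S0 t ∨ S1 t) ∧ SAcBes t) ∨ ∃ f, t = sleaf f

theorem box_sAcBes01OrLeaf {s : StratProf} (hs : S0 s ∨ S1 s) (h : SAcBes s) :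
    Box SAcBes01OrLeaf s := by
  refine ⟨SAcBes01OrLeaf, Or.inl ⟨hs, h⟩, fun t ht => ⟨ht, fun p c sd sr he => ?_⟩⟩
  rcases ht with ⟨ht, h⟩ | ⟨f, rfl⟩
  · rcases sAcBes01_dest ht h with ⟨s', he', hs', h'⟩ | ⟨c', s', he', hs', h'⟩
    · obtain ⟨-, -, rfl, rfl⟩ := snode_inj (he.symm.trans he')
      exact ⟨Or.inr ⟨f01, rfl⟩, Or.inl ⟨Or.inr hs', h'⟩⟩
    · obtain ⟨-, -, rfl, rfl⟩ := snode_inj (he.symm.trans he')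
      exact ⟨Or.inr ⟨f10, rfl⟩, Or.inl ⟨Or.inl hs', h'⟩⟩
  · exact absurd he (sleaf_ne_snode _ _ _ _ _)

theorem SAcBes01OrLeaf.conv {t : StratProf} (h : SAcBes01OrLeaf t) : Conv t := by
  rcases h with ⟨ht, h⟩ | ⟨f, rfl⟩
  · exact (payoffRel_f10_of_acBes ht (box_dest h).1).conv
  · exact Conv.leaf f

theorem SAcBes01OrLeaf.pe {t : StratProf} (h : SAcBes01OrLeaf t) (hconv : SConv t) : PE t := by
  rcases h with ⟨ht, h⟩ | ⟨f, rfl⟩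
  · refine ⟨hconv, ?_, ?_⟩
    · rintro p sd sr fd fr rfl hd hr
      rcases sAcBes01_payoffs ht h hd hr with ⟨-, hc, -⟩ | ⟨-, rfl, rfl⟩
      · exact Choice.noConfusion hc
      · exact le_rfl
    · rintro p sd sr fd fr rfl hd hr
      rcases sAcBes01_payoffs ht h hd hr with ⟨rfl, -, rfl, rfl⟩ | ⟨-, rfl, rfl⟩
      · norm_num [f01, f10]
      · exact le_rfl
  · exact ⟨hconv, fun _ _ _ _ _ he => absurd he (sleaf_ne_snode _ _ _ _ _),
      fun _ _ _ _ _ he => absurd he (sleaf_ne_snode _ _ _ _ _)⟩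

/-- for profiles of the 0,1-game, `SAcBes s` implies `SPE s`. -/
theorem spe_of_sacbes : ∀ s : StratProf, (S0 s ∨ S1 s) → SAcBes s → SPE s := by
  intro s hs h
  refine box_of_box (box_sAcBes01OrLeaf hs h) fun t ht => (box_dest ht).1.pe ?_
  exact sConv_of_box_conv (box_of_box ht fun u hu => (box_dest hu).1.conv)
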